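/- arXiv:2203.12688 — 5 statements merged into one kernel-verified Lean document; each statement's English description precedes it below -/
import Mathlib

section
/- Fix reals m, I, R > 0 and pre-impact momenta (p_x, p_y, p_θ) ∈ ℝ³. Then the radicand in the symmetry-breaking impact law satisfies p_x² + p_y² + (m/I)·p_θ² − (m/(I + mR²))·(R·p_x − p_θ)² ≥ p_y² ≥ 0; in particular the post-impact normal momentum p_y⁺ is a well-defined real number and satisfies |p_y⁺| ≥ |p_y|. -/
/-- The radicand of the post-impact normal momentum in the symmetry-breaking
(rolling-without-slipping) impact law for a stationary horizontal table. -/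
noncomputable def radicand (m I R px py pθ : ℝ) : ℝ :=
  px ^ 2 + py ^ 2 + (m / I) * pθ ^ 2 - (m / (I + m * R ^ 2)) * (R * px - pθ) ^ 2

/-- The post-impact normal momentum. -/
noncomputable def pyPlus (m I R px py pθ : ℝ) : ℝ :=
  Real.sqrt (radicand m I R px py pθ)

/-- The radicand in the symmetry-breaking impact law is at least `p_y² ≥ 0`,
so the post-impact normal momentum is a well-defined real number and
`|p_y⁺| ≥ |p_y|`. -/
theorem radicand_nonneg_and_pyPlus_ge
    (m I R px py pθ : ℝ) (hm : 0 < m) (hI : 0 < I) (hR : 0 < R) :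
    py ^ 2 ≤ radicand m I R px py pθ ∧ (0 : ℝ) ≤ py ^ 2 ∧
      |py| ≤ |pyPlus m I R px py pθ| := by
  have hden : 0 < I + m * R ^ 2 := by positivity
  have key : py ^ 2 ≤ radicand m I R px py pθ := by
    have heq : radicand m I R px py pθ - py ^ 2
        = (I * px + m * R * pθ) ^ 2 / (I * (I + m * R ^ 2)) := by
      unfold radicand
      field_simp
      ring
    have hpos : 0 ≤ (I * px + m * R * pθ) ^ 2 / (I * (I + m * R ^ 2)) := by positivity
    linarith
  refine ⟨key, by positivity, ?_⟩
  have h0 : 0 ≤ radicand m I R px py pθ := le_trans (by positivity) key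
  calc |py| = Real.sqrt (py ^ 2) := (Real.sqrt_sq_eq_abs py).symm
    _ ≤ Real.sqrt (radicand m I R px py pθ) := Real.sqrt_le_sqrt key
    _ = |pyPlus m I R px py pθ| := by
        rw [pyPlus, abs_of_nonneg (Real.sqrt_nonneg _)]
end

section
/- Fix reals m, I, R > 0 and pre-impact momenta (p_x, p_y, p_θ) ∈ ℝ³, and let (p_x⁺, p_y⁺, p_θ⁺) be given by the symmetry-breaking impact map for a stationary horizontal table. Then kinetic energy is conserved across the impact: (p_x⁺)²/(2m) + (p_y⁺)²/(2m) + (p_θ⁺)²/(2I) = p_x²/(2m) + p_y²/(2m) + p_θ²/(2I). -/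
/-- Kinetic energy is conserved across the symmetry-breaking
(rolling-without-slipping) impact for a stationary horizontal table. -/
theorem impact_conserves_energy
    (m I R px py pθ : ℝ) (hm : 0 < m) (hI : 0 < I) (hR : 0 < R)
    (pxPlus pyPlus pθPlus : ℝ)
    (hpx : pxPlus = R * m * (R * px - pθ) / (I + m * R ^ 2))
    (hpy : pyPlus = Real.sqrt (px ^ 2 + py ^ 2 + (m / I) * pθ ^ 2 -
      (m / (I + m * R ^ 2)) * (R * px - pθ) ^ 2))
    (hpθ : pθPlus = I * (pθ - R * px) / (I + m * R ^ 2)) :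
    pxPlus ^ 2 / (2 * m) + pyPlus ^ 2 / (2 * m) + pθPlus ^ 2 / (2 * I) =
      px ^ 2 / (2 * m) + py ^ 2 / (2 * m) + pθ ^ 2 / (2 * I) := by
  have hd : 0 < I + m * R ^ 2 := by positivity
  have hA : 0 ≤ px ^ 2 + py ^ 2 + (m / I) * pθ ^ 2 -
      (m / (I + m * R ^ 2)) * (R * px - pθ) ^ 2 := by
    have hpos : 0 < I * (I + m * R ^ 2) := by positivity
    have h2 : (px ^ 2 + py ^ 2 + (m / I) * pθ ^ 2 -
        (m / (I + m * R ^ 2)) * (R * px - pθ) ^ 2) * (I * (I + m * R ^ 2)) =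
        py ^ 2 * (I * (I + m * R ^ 2)) + (I * px + m * R * pθ) ^ 2 := by
      field_simp; ring
    nlinarith [sq_nonneg (I * px + m * R * pθ), mul_nonneg (sq_nonneg py) hpos.le]
  have hsq : pyPlus ^ 2 = px ^ 2 + py ^ 2 + (m / I) * pθ ^ 2 -
      (m / (I + m * R ^ 2)) * (R * px - pθ) ^ 2 := by
    rw [hpy, Real.sq_sqrt hA]
  rw [hpx, hpθ, hsq]
  field_simp
  ring
end

section
/- Fix reals m, I, R > 0 and pre-impact momenta (p_x, p_y, p_θ) ∈ ℝ³, and let (p_x⁺, p_y⁺, p_θ⁺) be given by the symmetry-breaking impact map for a stationary horizontal table. Then there exist real multipliers ε and λ such that the momentum jump decomposes along the guard normal dh = −dy and the lifted constraint form η̃ = R·dθ + dx: namely (p_x⁺ − p_x, p_y⁺ − p_y, p_θ⁺ − p_θ) = ε·(0, −1, 0) + λ·(1, 0, R). Equivalently, p_θ⁺ − p_θ = R·(p_x⁺ − p_x). -/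
/-- The momentum jump across the symmetry-breaking impact decomposes along the
guard normal `dh = -dy` and the lifted rolling-constraint form
`η̃ = R·dθ + dx`; equivalently `p_θ⁺ - p_θ = R·(p_x⁺ - p_x)`. -/
theorem impact_momentum_jump_decomposition
    (m I R px py pθ : ℝ) (hm : 0 < m) (hI : 0 < I) (hR : 0 < R)
    (pxPlus pyPlus pθPlus : ℝ)
    (hpx : pxPlus = R * m * (R * px - pθ) / (I + m * R ^ 2))
    (hpy : pyPlus = Real.sqrt (px ^ 2 + py ^ 2 + (m / I) * pθ ^ 2 -
      (m / (I + m * R ^ 2)) * (R * px - pθ) ^ 2))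
    (hpθ : pθPlus = I * (pθ - R * px) / (I + m * R ^ 2)) :
    (∃ ε lam : ℝ,
      (pxPlus - px, pyPlus - py, pθPlus - pθ) =
        ε • ((0 : ℝ), (-1 : ℝ), (0 : ℝ)) + lam • ((1 : ℝ), (0 : ℝ), R)) ∧
      pθPlus - pθ = R * (pxPlus - px) := by
  have hden : I + m * R ^ 2 ≠ 0 := by positivity
  have key : pθPlus - pθ = R * (pxPlus - px) := by
    subst hpx hpθ; field_simp; ring
  refine ⟨⟨py - pyPlus, pxPlus - px, ?_⟩, key⟩
  simp [Prod.ext_iff, key]; ring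
end

section
/- Fix reals m, I, R > 0 and pre-impact momenta (p_x, p_y, p_θ) ∈ ℝ³, and let p_y⁺ be the post-impact normal momentum under the symmetry-breaking impact map for a stationary horizontal table. Then (p_y⁺)² = p_y² if and only if I·p_x + m·R·p_θ = 0; otherwise (p_y⁺)² > p_y², i.e., the impact strictly transfers tangential and rotational kinetic energy into the normal direction whenever the pre-impact state violates the rolling constraint. -/
/-- The normal momentum magnitude is preserved, `(p_y⁺)² = p_y²`, exactly when
the pre-impact state satisfies the rolling constraint `I·p_x + m·R·p_θ = 0`;
otherwise the impact strictly transfers tangential and rotational kinetic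
energy into the normal direction: `(p_y⁺)² > p_y²`. -/
theorem impact_normal_energy_transfer
    (m I R px py pθ : ℝ) (hm : 0 < m) (hI : 0 < I) (hR : 0 < R)
    (pyPlus : ℝ)
    (hpy : pyPlus = Real.sqrt (px ^ 2 + py ^ 2 + (m / I) * pθ ^ 2 -
      (m / (I + m * R ^ 2)) * (R * px - pθ) ^ 2)) :
    (pyPlus ^ 2 = py ^ 2 ↔ I * px + m * R * pθ = 0) ∧
      (I * px + m * R * pθ ≠ 0 → py ^ 2 < pyPlus ^ 2) := by
  have hden : 0 < I + m * R ^ 2 := by positivity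
  have hden' : 0 < I * (I + m * R ^ 2) := by positivity
  have harg : px ^ 2 + py ^ 2 + (m / I) * pθ ^ 2 -
      (m / (I + m * R ^ 2)) * (R * px - pθ) ^ 2
      = py ^ 2 + (I * px + m * R * pθ) ^ 2 / (I * (I + m * R ^ 2)) := by
    field_simp
    ring
  have ht : 0 ≤ (I * px + m * R * pθ) ^ 2 / (I * (I + m * R ^ 2)) := by positivity
  have hsq : pyPlus ^ 2 = py ^ 2 + (I * px + m * R * pθ) ^ 2 / (I * (I + m * R ^ 2)) := by
    rw [hpy, Real.sq_sqrt (by rw [harg]; positivity), harg]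
  constructor
  · rw [hsq]
    constructor
    · intro h
      have h0 : (I * px + m * R * pθ) ^ 2 / (I * (I + m * R ^ 2)) = 0 := by linarith
      have := (div_eq_zero_iff.mp h0).resolve_right hden'.ne'
      exact pow_eq_zero_iff (n := 2) (by norm_num) |>.mp this
    · intro h
      rw [h]
      simp
  · intro h
    rw [hsq]
    have : 0 < (I * px + m * R * pθ) ^ 2 / (I * (I + m * R ^ 2)) := by positivity
    linarith
end

section
/- Fix reals m, I, R > 0 and a table angle u ∈ ℝ. Let Δ₀ : ℝ³ → ℝ³ be the symmetry-breaking impact map for a stationary horizontal table, and let R_u : ℝ³ → ℝ³ be the rotation R_u(p_x, p_y, p_θ) = (p_x·cos(u) − p_y·sin(u), p_x·sin(u) + p_y·cos(u), p_θ). Define Δ_u := R_u ∘ Δ₀ ∘ R_{−u}. Then Δ_u satisfies the symmetry-breaking impact law for a stationary table tilted at angle u: for every (p_x, p_y, p_θ) ∈ ℝ³ with image (p_x⁺, p_y⁺, p_θ⁺) = Δ_u(p_x, p_y, p_θ), (i) the post-impact rolling constraint holds: R·(p_θ⁺/I) + (p_x⁺·cos(u) + p_y⁺·sin(u))/m = 0;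 (ii) kinetic energy is conserved: (p_x⁺)²/(2m) + (p_y⁺)²/(2m) + (p_θ⁺)²/(2I) = p_x²/(2m) + p_y²/(2m) + p_θ²/(2I); and (iii) there exist real multipliers ε, λ with (p_x⁺ − p_x, p_y⁺ − p_y, p_θ⁺ − p_θ) = ε·(sin(u), −cos(u), 0) + λ·(cos(u), sin(u), R). Thus the general reset map for u ≠ 0 is recovered from the u = 0 case by a rotational change of variables. -/
/-- The symmetry-breaking (rolling-without-slipping) impact map `Δ₀` for a
stationary horizontal table, acting on momenta `(p_x, p_y, p_θ)`. -/
noncomputable def rollingImpact0 (m I R : ℝ) : ℝ × ℝ × ℝ → ℝ × ℝ × ℝ :=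
  fun p =>
    (R * m * (R * p.1 - p.2.2) / (I + m * R ^ 2),
     Real.sqrt (p.1 ^ 2 + p.2.1 ^ 2 + (m / I) * p.2.2 ^ 2 -
       (m / (I + m * R ^ 2)) * (R * p.1 - p.2.2) ^ 2),
     I * (p.2.2 - R * p.1) / (I + m * R ^ 2))

/-- Rotation of the linear momentum components by angle `u`. -/
noncomputable def momentumRotation (u : ℝ) : ℝ × ℝ × ℝ → ℝ × ℝ × ℝ :=
  fun p =>
    (p.1 * Real.cos u - p.2.1 * Real.sin u,
     p.1 * Real.sin u + p.2.1 * Real.cos u,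
     p.2.2)

/-- The general reset map for a stationary table tilted at angle `u`,
`Δ_u := R_u ∘ Δ₀ ∘ R_{-u}`, satisfies the symmetry-breaking impact law for
angle `u`: the post-impact state rolls without slipping, kinetic energy is
conserved, and the momentum jump lies in the span of the guard normal
`(sin u, -cos u, 0)` and the lifted rolling-constraint form
`(cos u, sin u, R)`. -/
theorem tiltedImpact_satisfies_impact_law
    (m I R : ℝ) (hm : 0 < m) (hI : 0 < I) (hR : 0 < R) (u : ℝ)
    (p : ℝ × ℝ × ℝ) :
    ∀ q : ℝ × ℝ × ℝ,
      q = (momentumRotation u ∘ rollingImpact0 m I R ∘ momentumRotation (-u)) p →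
        R * (q.2.2 / I) + (q.1 * Real.cos u + q.2.1 * Real.sin u) / m = 0 ∧
        q.1 ^ 2 / (2 * m) + q.2.1 ^ 2 / (2 * m) + q.2.2 ^ 2 / (2 * I) =
          p.1 ^ 2 / (2 * m) + p.2.1 ^ 2 / (2 * m) + p.2.2 ^ 2 / (2 * I) ∧
        ∃ ε lam : ℝ,
          (q.1 - p.1, q.2.1 - p.2.1, q.2.2 - p.2.2) =
            ε • (Real.sin u, -Real.cos u, (0 : ℝ)) +
              lam • (Real.cos u, Real.sin u, R) := by
  intro q hq
  have hm' := hm.ne'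
  have hI' := hI.ne'
  have hD : (0:ℝ) < I + m * R ^ 2 := by positivity
  have hD' := hD.ne'
  obtain ⟨p1, p2, p3⟩ := p
  simp only [Function.comp_apply, momentumRotation, rollingImpact0, Real.cos_neg,
    Real.sin_neg] at hq
  set cu := Real.cos u with hcu
  set su := Real.sin u with hsu
  have hcs : cu ^ 2 + su ^ 2 = 1 := by
    rw [hcu, hsu, ← Real.sin_sq_add_cos_sq u]; ring
  dsimp only at hq ⊢
  obtain ⟨a, b, hp1, hp2⟩ : ∃ a b, p1 * cu - p2 * -su = a ∧ p1 * -su + p2 * cu = b :=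
    ⟨_, _, rfl, rfl⟩
  rw [hp1, hp2] at hq
  have hq1 : p1 = a * cu - b * su := by
    rw [← hp1, ← hp2]; linear_combination -p1 * hcs
  have hq2 : p2 = a * su + b * cu := by
    rw [← hp1, ← hp2]; linear_combination -p2 * hcs
  rw [hq1, hq2]
  set A := R * m * (R * a - p3) / (I + m * R ^ 2) with hA
  set C := I * (p3 - R * a) / (I + m * R ^ 2) with hC
  have harg : a ^ 2 + b ^ 2 + m / I * p3 ^ 2 - m / (I + m * R ^ 2) * (R * a - p3) ^ 2
      = b ^ 2 + (I * a + m * R * p3) ^ 2 / (I * (I + m * R ^ 2)) := by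
    field_simp
    ring
  set S := Real.sqrt (a ^ 2 + b ^ 2 + m / I * p3 ^ 2 -
    m / (I + m * R ^ 2) * (R * a - p3) ^ 2) with hS
  have hS2 : S ^ 2 = a ^ 2 + b ^ 2 + m / I * p3 ^ 2 -
      m / (I + m * R ^ 2) * (R * a - p3) ^ 2 := by
    rw [hS]; apply Real.sq_sqrt; rw [harg]; positivity
  set lam := -(I * a + m * R * p3) / (I + m * R ^ 2) with hlam
  have hAlam : A = a + lam := by rw [hA, hlam]; field_simp; ring
  have hClam : C = p3 + lam * R := by rw [hC, hlam]; field_simp; ring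
  subst hq
  dsimp only
  refine ⟨?_, ?_, b - S, lam, ?_⟩
  · have h1 : (A * cu - S * su) * cu + (A * su + S * cu) * su = A := by
      linear_combination A * hcs
    rw [h1, hA, hC]
    field_simp
    ring
  · have energy : (A ^ 2 + S ^ 2) / (2 * m) + C ^ 2 / (2 * I)
        = (a ^ 2 + b ^ 2) / (2 * m) + p3 ^ 2 / (2 * I) := by
      rw [hS2, hA, hC]
      field_simp
      ring
    linear_combination energy + ((A ^ 2 + S ^ 2 - a ^ 2 - b ^ 2) / (2 * m)) * hcs
  · simp only [Prod.smul_mk, Prod.mk_add_mk, smul_eq_mul, Prod.mk.injEq]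
    refine ⟨?_, ?_, ?_⟩
    · linear_combination cu * hAlam
    · linear_combination su * hAlam
    · linear_combination hClam
end
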